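/- Let F be a graph with n vertices and m edges, let k ∈ ℕ, let H ∈ IIM_k(K_n), and set t = C(n,2) − m (the number of edges of K_n not in F). Suppose there exist step indices 0 = l_0 < l_1 < … < l_t ≤ k and sets U_0 ⊆ U_1 ⊆ … ⊆ U_t ⊆ V(H) such that: U_0 is the set of level-0 vertices (the vertices of the initial K_n); and for each 1 ≤ i ≤ t, every vertex of U_{i−1} is cloned (not anticloned) at step l_i, and U_i equals U_{i−1} together with the step-l_i clones of all vertices of U_{i−1}. Then H contains an induced subgraph isomorphic to F. -/

import Mathlib

/-- Vertex type after `l` IIM steps starting from vertex type `V`: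
at each step every existing vertex gets one new copy. -/
def IterV (V : Type) : ℕ → Type
  | 0 => V
  | l + 1 => IterV V l ⊕ IterV V l

instance iterVFintype {V : Type} [Fintype V] : ∀ l, Fintype (IterV V l)
  | 0 => inferInstanceAs (Fintype V)
  | l + 1 =>
    letI := iterVFintype (V := V) l
    inferInstanceAs (Fintype (IterV V l ⊕ IterV V l))

instance iterVNonempty {V : Type} [Nonempty V] : ∀ l, Nonempty (IterV V l)
  | 0 => inferInstanceAs (Nonempty V)
  | l + 1 =>
    letI := iterVNonempty (V := V) l
    inferInstanceAs (Nonempty (IterV V l ⊕ IterV V l))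

/-- One IIM step: each vertex `v` of `G` gets a new copy (`Sum.inr v`), which is a
clone of `v` (joined to the closed neighborhood of `v`) if `σ v = true`, and an
anticlone of `v` (joined to the complement of the closed neighborhood) if `σ v = false`.
Old vertices (`Sum.inl`) keep the edges of `G`; new vertices form an independent set. -/
def iimStep {V : Type} (G : SimpleGraph V) (σ : V → Bool) : SimpleGraph (V ⊕ V) where
  Adj x y :=
    match x, y with
    | Sum.inl u, Sum.inl v => G.Adj u v
    | Sum.inl u, Sum.inr v =>
        if σ v = true then u = v ∨ G.Adj u v else ¬(u = v ∨ G.Adj u v)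
    | Sum.inr u, Sum.inl v =>
        if σ u = true then v = u ∨ G.Adj v u else ¬(v = u ∨ G.Adj v u)
    | Sum.inr _, Sum.inr _ => False
  symm := ⟨by
    rintro (u | u) (v | v) h
    · exact G.adj_symm h
    · exact h
    · exact h
    · exact h⟩
  loopless := ⟨by
    rintro (u | u) h
    · exact G.irrefl h
    · exact h⟩

/-- The IIM graph after `l` steps starting from `G`, where `σ i` records, for each
vertex existing after `i` steps, whether its copy created at step `i+1` is a clone
(`true`) or an anticlone (`false`).  `IIM_l(G)` is exactly the set of graphs of the
form `iimGraph G σ l` as `σ` varies. -/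
def iimGraph {V : Type} (G : SimpleGraph V) (σ : ∀ i, IterV V i → Bool) :
    ∀ l, SimpleGraph (IterV V l)
  | 0 => G
  | l + 1 => iimStep (iimGraph G σ l) (σ l)

/-- The level (creation step) of a vertex of an IIM graph. -/
def levelOf {V : Type} : ∀ l, IterV V l → ℕ
  | 0, _ => 0
  | l + 1, Sum.inl x => levelOf l x
  | l + 1, Sum.inr _ => l + 1

/-- The (level-0) vertex `x` of the initial graph, viewed as a vertex of the IIM graph
after `l` steps. -/
def liftV {V : Type} (x : V) : ∀ l, IterV V l
  | 0 => x
  | l + 1 => Sum.inl (liftV x l)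

/-- `clonedAt σ l s x` says: the vertex `x` of the IIM graph after `l` steps already
existed before step `s` (`1 ≤ s ≤ l`), and its copy created at step `s` is a clone
(not an anticlone). -/
def clonedAt {V : Type} (σ : ∀ i, IterV V i → Bool) :
    ∀ (l : ℕ), ℕ → IterV V l → Prop
  | 0, _, _ => False
  | l + 1, s, Sum.inl y => if s = l + 1 then σ l y = true else clonedAt σ l s y
  | _ + 1, _, Sum.inr _ => False

/-- `copyAt l s x = some x'` when the vertex `x` of the IIM graph after `l` steps
already existed before step `s` and `x'` is its copy created at step `s`
(viewed in the IIM graph after `l` steps); otherwise `none`. -/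
def copyAt {V : Type} :
    ∀ (l : ℕ), ℕ → IterV V l → Option (IterV V l)
  | 0, _, _ => none
  | l + 1, s, Sum.inl y =>
      if s = l + 1 then some (Sum.inr y) else (copyAt l s y).map Sum.inl
  | _ + 1, _, Sum.inr _ => none

/-! Enumerate the non-edges `e₁, …, e_t` of `F` and start from the level-0 copy of `Kₙ`.
At step `l_i` every vertex of the current copy has a clone; moving the two endpoints of `e_i`
to their clones destroys the edge `e_i`, because clones made at the same step are independent,
and keeps every other adjacency, because a clone is adjacent to every older vertex its original
is adjacent to. After `t` rounds the copy induces `F`. -/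

-- Stated at type `IterV V (l + 1)` rather than `_ ⊕ _`, which `simp` would not match.
@[simp]
theorem IterV.inl_inj {V : Type} {l : ℕ} {u v : IterV V l} :
    @Eq (IterV V (l + 1)) (.inl u) (.inl v) ↔ u = v :=
  Sum.inl_injective.eq_iff

section Levels

variable {V : Type}

theorem levelOf_le : ∀ (l : ℕ) (x : IterV V l), levelOf l x ≤ l
  | 0, _ => le_rfl
  | l + 1, Sum.inl x => (levelOf_le l x).trans l.le_succ
  | _ + 1, Sum.inr _ => le_rfl

theorem liftV_injective : ∀ l, Function.Injective fun x : V => liftV x l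
  | 0 => fun _ _ h => h
  | l + 1 => fun _ _ h => liftV_injective l (Sum.inl.inj h)

theorem levelOf_copyAt {l s : ℕ} {u u' : IterV V l} (h : copyAt l s u = some u') :
    levelOf l u < s ∧ levelOf l u' = s := by
  induction l with
  | zero => simp [copyAt] at h
  | succ l ih =>
    rcases u with u | u
    · simp only [copyAt] at h
      split_ifs at h with hs
      · cases h
        subst hs
        exact ⟨Nat.lt_succ_of_le (levelOf_le l u), rfl⟩
      · obtain ⟨w, hw, rfl⟩ := Option.map_eq_some_iff.mp h
        exact ih hw
    · simp [copyAt] at h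

theorem copyAt_inj {l s : ℕ} {u v w : IterV V l} (hu : copyAt l s u = some w)
    (hv : copyAt l s v = some w) : u = v := by
  induction l with
  | zero => simp [copyAt] at hu
  | succ l ih =>
    rcases u with u | u <;> rcases v with v | v <;> simp only [copyAt] at hu hv
    · split_ifs at hu hv
      · cases hu; cases hv; rfl
      · obtain ⟨w₁, hw₁, rfl⟩ := Option.map_eq_some_iff.mp hu
        obtain ⟨w₂, hw₂, hw⟩ := Option.map_eq_some_iff.mp hv
        cases hw
        rw [ih hw₁ hw₂]
    all_goals simp at hu hv

theorem exists_copyAt_of_clonedAt {σ : ∀ i, IterV V i → Bool} {l s : ℕ} {u : IterV V l}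
    (h : clonedAt σ l s u) : ∃ u', copyAt l s u = some u' := by
  induction l with
  | zero => exact h.elim
  | succ l ih =>
    rcases u with u | u
    · simp only [clonedAt] at h
      simp only [copyAt]
      split_ifs at h ⊢
      · exact ⟨_, rfl⟩
      · obtain ⟨u', hu'⟩ := ih h
        exact ⟨_, by rw [hu']; rfl⟩
    · exact h.elim

theorem levelOf_lt_of_clonedAt {σ : ∀ i, IterV V i → Bool} {l s : ℕ} {u : IterV V l}
    (h : clonedAt σ l s u) : levelOf l u < s :=
  (levelOf_copyAt (exists_copyAt_of_clonedAt h).choose_spec).1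

end Levels

section Adjacency

variable {V : Type} (G : SimpleGraph V) (σ : ∀ i, IterV V i → Bool)

@[simp]
theorem iimGraph_succ_adj_inl_inl {l : ℕ} {u v : IterV V l} :
    (iimGraph G σ (l + 1)).Adj (.inl u) (.inl v) ↔ (iimGraph G σ l).Adj u v :=
  Iff.rfl

@[simp]
theorem iimGraph_succ_adj_inr_inl {l : ℕ} {u v : IterV V l} :
    (iimGraph G σ (l + 1)).Adj (.inr u) (.inl v) ↔
      if σ l u then v = u ∨ (iimGraph G σ l).Adj v u
      else ¬(v = u ∨ (iimGraph G σ l).Adj v u) :=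
  Iff.rfl

@[simp]
theorem iimGraph_succ_not_adj_inr_inr {l : ℕ} {u v : IterV V l} :
    ¬ (iimGraph G σ (l + 1)).Adj (.inr u) (.inr v) :=
  id

theorem iimGraph_adj_liftV (l : ℕ) (x y : V) :
    (iimGraph G σ l).Adj (liftV x l) (liftV y l) ↔ G.Adj x y := by
  induction l with
  | zero => rfl
  | succ l ih => exact ih

def iimLift (l : ℕ) : G ↪g iimGraph G σ l where
  toFun x := liftV x l
  inj' := liftV_injective l
  map_rel_iff' := iimGraph_adj_liftV G σ l _ _

theorem iimGraph_not_adj_copyAt {l s : ℕ} {u u' v v' : IterV V l}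
    (hu : copyAt l s u = some u') (hv : copyAt l s v = some v') :
    ¬ (iimGraph G σ l).Adj u' v' := by
  induction l with
  | zero => simp [copyAt] at hu
  | succ l ih =>
    rcases u with u | u <;> rcases v with v | v <;> simp only [copyAt] at hu hv
    · split_ifs at hu hv
      · cases hu; cases hv; exact iimGraph_succ_not_adj_inr_inr G σ
      · obtain ⟨w₁, hw₁, rfl⟩ := Option.map_eq_some_iff.mp hu
        obtain ⟨w₂, hw₂, rfl⟩ := Option.map_eq_some_iff.mp hv
        exact ih hw₁ hw₂
    all_goals simp at hu hv

theorem iimGraph_adj_copyAt_iff {l s : ℕ} {u u' v : IterV V l} (hc : clonedAt σ l s u)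
    (hu : copyAt l s u = some u') (hv : levelOf l v < s) :
    (iimGraph G σ l).Adj u' v ↔ v = u ∨ (iimGraph G σ l).Adj u v := by
  induction l with
  | zero => exact hc.elim
  | succ l ih =>
    have hsl : s ≤ l + 1 := (levelOf_copyAt hu).2 ▸ levelOf_le _ u'
    rcases u with u | u
    · rcases v with v | v
      · simp only [clonedAt, copyAt] at hc hu
        split_ifs at hc hu
        · cases hu
          simp [hc, (iimGraph G σ l).adj_comm]
        · obtain ⟨w, hw, rfl⟩ := Option.map_eq_some_iff.mp hu
          simpa using ih hc hw hv
      · exact absurd hv (by simp only [levelOf]; omega)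
    · exact hc.elim

end Adjacency

section Cloning

variable {V α : Type} (G : SimpleGraph V) (σ : ∀ i, IterV V i → Bool)

theorem exists_embedding_deleteEdges_singleton {G' : SimpleGraph α} {l s : ℕ}
    (f : G' ↪g iimGraph G σ l) (hf : ∀ x, clonedAt σ l s (f x)) (z : Sym2 α) :
    ∃ f' : G'.deleteEdges {z} ↪g iimGraph G σ l,
      ∀ x, f' x = f x ∨ copyAt l s (f x) = some (f' x) := by
  classical
  choose c hc using fun x => exists_copyAt_of_clonedAt (hf x)
  have hlt x : levelOf l (f x) < s := levelOf_lt_of_clonedAt (hf x)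
  have hc_ne x y : c x ≠ f y := fun h => (hlt y).ne (h ▸ (levelOf_copyAt (hc x)).2)
  have hc_adj x y (hxy : x ≠ y) : (iimGraph G σ l).Adj (c x) (f y) ↔ G'.Adj x y := by
    rw [iimGraph_adj_copyAt_iff G σ (hf x) (hc x) (hlt y), f.map_adj_iff]
    simp [f.injective.ne hxy.symm]
  let g x := if x ∈ z then c x else f x
  have hg_inj : Function.Injective g := by
    intro x y h
    by_cases hx : x ∈ z <;> by_cases hy : y ∈ z <;> simp only [g, hx, hy, if_true, if_false] at h
    · exact f.injective (copyAt_inj (h ▸ hc x) (hc y))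
    · exact (hc_ne x y h).elim
    · exact (hc_ne y x h.symm).elim
    · exact f.injective h
  have hg_adj x y : (iimGraph G σ l).Adj (g x) (g y) ↔ (G'.deleteEdges {z}).Adj x y := by
    rw [SimpleGraph.deleteEdges_adj, Set.mem_singleton_iff]
    by_cases hxy : x = y
    · subst hxy; simp
    rw [eq_comm, ← Sym2.mem_and_mem_iff hxy]
    by_cases hx : x ∈ z <;> by_cases hy : y ∈ z <;> simp only [g, hx, hy, if_true, if_false]
    · simp [iimGraph_not_adj_copyAt G σ (hc x) (hc y)]
    · simp [hc_adj x y hxy]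
    · simp [(iimGraph G σ l).adj_comm, hc_adj y x (Ne.symm hxy), G'.adj_comm]
    · simp
  refine ⟨⟨⟨g, hg_inj⟩, hg_adj _ _⟩, fun x => ?_⟩
  by_cases hx : x ∈ z
  · exact .inr (by simp [g, hx, hc])
  · exact .inl (by simp [g, hx])

theorem exists_embedding_deleteEdges_range {G' : SimpleGraph α} {l t : ℕ} (e : Fin t → Sym2 α)
    (lv : ℕ → ℕ) (U : ℕ → Set (IterV V l))
    (hcl : ∀ i, 1 ≤ i → i ≤ t → ∀ u ∈ U (i - 1), clonedAt σ l (lv i) u)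
    (hU : ∀ i, 1 ≤ i → i ≤ t →
      U (i - 1) ∪ {w | ∃ u ∈ U (i - 1), copyAt l (lv i) u = some w} ⊆ U i)
    (f₀ : G' ↪g iimGraph G σ l) (hf₀ : ∀ x, f₀ x ∈ U 0) :
    Nonempty (G'.deleteEdges (Set.range e) ↪g iimGraph G σ l) := by
  suffices h : ∀ i ≤ t, ∃ f : G'.deleteEdges (e '' {j | (j : ℕ) < i}) ↪g iimGraph G σ l,
      ∀ x, f x ∈ U i by
    obtain ⟨f, -⟩ := h t le_rfl
    rw [← Set.image_univ]
    exact ⟨by simpa using f⟩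
  intro i hi
  induction i with
  | zero =>
    rw [show e '' {j | (j : ℕ) < 0} = ∅ by simp, SimpleGraph.deleteEdges_empty]
    exact ⟨f₀, hf₀⟩
  | succ i ih =>
    obtain ⟨f, hf⟩ := ih (by omega)
    have hclf x : clonedAt σ l (lv (i + 1)) (f x) := hcl (i + 1) (by omega) hi _ (hf x)
    obtain ⟨f', hf'⟩ := exists_embedding_deleteEdges_singleton G σ f hclf (e ⟨i, hi⟩)
    have hD : e '' {j | (j : ℕ) < i + 1} = e '' {j | (j : ℕ) < i} ∪ {e ⟨i, hi⟩} := by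
      rw [← Set.image_singleton, ← Set.image_union]
      congr 1
      ext j
      simp [Fin.ext_iff]
      omega
    rw [hD, ← SimpleGraph.deleteEdges_deleteEdges]
    refine ⟨f', fun x => hU (i + 1) (by omega) hi ?_⟩
    rcases hf' x with h | h
    · exact .inl (h ▸ hf x)
    · exact .inr ⟨f x, hf x, h⟩

end Cloning

theorem SimpleGraph.ncard_edgeSet_compl {V : Type*} [Fintype V] (F : SimpleGraph V) :
    Fᶜ.edgeSet.ncard = (Fintype.card V).choose 2 - F.edgeSet.ncard := by
  classical
  rw [← top_sdiff, edgeSet_sdiff, Set.ncard_sdiff (edgeSet_mono le_top),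
    ← coe_edgeFinset, Set.ncard_coe_finset, card_edgeFinset_top_eq_card_choose_two]

theorem stmt17_general {n : ℕ} (F : SimpleGraph (Fin n)) (m : ℕ) (hm : m = F.edgeSet.ncard)
    (k : ℕ) (σ : ∀ i, IterV (Fin n) i → Bool)
    (t : ℕ) (ht : t = Nat.choose n 2 - m)
    (lv : ℕ → ℕ)
    (U : ℕ → Set (IterV (Fin n) k))
    (hU0 : U 0 = Set.range fun x : Fin n => liftV x k)
    (hcl : ∀ i, 1 ≤ i → i ≤ t → ∀ u ∈ U (i - 1), clonedAt σ k (lv i) u)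
    (hUi : ∀ i, 1 ≤ i → i ≤ t →
      U i = U (i - 1) ∪ {w | ∃ u ∈ U (i - 1), copyAt k (lv i) u = some w}) :
    Nonempty (F ↪g iimGraph (⊤ : SimpleGraph (Fin n)) σ k) := by
  obtain ⟨t', e, he⟩ := (Set.toFinite Fᶜ.edgeSet).fin_embedding
  obtain rfl : t' = t := by
    have hcard := F.ncard_edgeSet_compl
    rw [Fintype.card_fin] at hcard
    rw [ht, hm, ← hcard, ← he,
      Set.ncard_range_of_injective e.injective, Nat.card_eq_fintype_card, Fintype.card_fin]
  have hF : (⊤ : SimpleGraph (Fin n)).deleteEdges (Set.range e) = F := by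
    rw [he, SimpleGraph.deleteEdges_edgeSet, top_sdiff, compl_compl]
  rw [← hF]
  exact exists_embedding_deleteEdges_range ⊤ σ e lv U hcl (fun i hi₁ hi₂ => (hUi i hi₁ hi₂).ge)
    (iimLift ⊤ σ k) (fun x => hU0 ▸ ⟨x, rfl⟩)

/-- Let `F` be a graph on `n` vertices with `m` edges, let
`H ∈ IIM_k(K_n)`, and let `t = C(n,2) - m`.  Suppose there are steps
`0 = l₀ < l₁ < … < l_t ≤ k` and sets `U₀ ⊆ … ⊆ U_t ⊆ V(H)` such that `U₀` is the set
of level-0 vertices, every vertex of `U_{i-1}` is cloned at step `l_i`, and `U_i` is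
`U_{i-1}` together with the step-`l_i` clones of its vertices.  Then `H` contains an
induced copy of `F`. -/
theorem stmt17 {n : ℕ} (F : SimpleGraph (Fin n)) (m : ℕ) (hm : m = F.edgeSet.ncard)
    (k : ℕ) (σ : ∀ i, IterV (Fin n) i → Bool)
    (t : ℕ) (ht : t = Nat.choose n 2 - m)
    (lv : ℕ → ℕ) (hlv0 : lv 0 = 0)
    (hmono : ∀ i, i < t → lv i < lv (i + 1)) (hlvk : lv t ≤ k)
    (U : ℕ → Set (IterV (Fin n) k))
    (hU0 : U 0 = Set.range fun x : Fin n => liftV x k)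
    (hcl : ∀ i, 1 ≤ i → i ≤ t → ∀ u ∈ U (i - 1), clonedAt σ k (lv i) u)
    (hUi : ∀ i, 1 ≤ i → i ≤ t →
      U i = U (i - 1) ∪ {w | ∃ u ∈ U (i - 1), copyAt k (lv i) u = some w}) :
    Nonempty (F ↪g iimGraph (⊤ : SimpleGraph (Fin n)) σ k) :=
  stmt17_general F m hm k σ t ht lv U hU0 hcl hUi
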